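/- For every integer sequence μ ∈ ℤ^k and every partition λ with at most k parts (λ_1 ≥ … ≥ λ_k ≥ 0), the skew immaculate noncommutative symmetric function decomposes as I_{μ/λ} = Σ_γ ∏_{r=1}^{k} ε(h(r,τ_r))·H_{Δ(h(r,τ_r))}, where the sum is over all tunnel hook coverings γ (with chosen tunnel cells τ_1,…,τ_k) of the diagram D_{μ/λ}, and the noncommutative product is taken in the order r = 1, 2, …, k. -/

import Mathlib

open scoped BigOperators

/-- NSym modeled as the free noncommutative ℚ-algebra on generators indexed by ℕ
(the generator `n` playing the role of `H_n` for `n ≥ 1`). -/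
abbrev NSym : Type := FreeAlgebra ℚ ℕ

/-- The complete homogeneous noncommutative symmetric functions, extended to ℤ:
`H 0 = 1`, `H n = 0` for `n < 0`, and `H n` the `n`-th generator for `n ≥ 1`. -/
noncomputable def H (n : ℤ) : NSym :=
  if n < 0 then 0 else if n = 0 then 1 else FreeAlgebra.ι ℚ n.toNat

/-- `DecFrom k r ν` : `ν_r ≥ ν_{r+1} ≥ … ≥ ν_k` (1-based indexing). -/
def DecFrom (k r : ℕ) (ν : ℕ → ℕ) : Prop :=
  ∀ i, r ≤ i → i < k → ν (i + 1) ≤ ν i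

/-- `(p,q)` is a boundary cell of the partial GBPR diagram `D^{(r-1)}_{μ/ν}`. -/
def IsBoundary (k r : ℕ) (μ : ℕ → ℤ) (ν : ℕ → ℕ) (p q : ℕ) : Prop :=
  r ≤ p ∧ p ≤ k ∧
    (if p = r then
      ν r + 1 ≤ q ∧ (q : ℤ) ≤ max ((ν r : ℤ) + 1) (max (μ r) (2 * (ν r : ℤ) - μ r))
    else
      ν p + 1 ≤ q ∧ q ≤ ν (p - 1) + 1)

/-- `(p,q)` is a tunnel cell of `D^{(r-1)}_{μ/ν}`. -/
def IsTunnel (k r : ℕ) (μ : ℕ → ℤ) (ν : ℕ → ℕ) (p q : ℕ) : Prop :=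
  IsBoundary k r μ ν p q ∧ q = ν p + 1

/-- The set of boundary cells of `D^{(r-1)}_{μ/ν}` not tunnel cells. -/
def IsN (k r : ℕ) (μ : ℕ → ℤ) (ν : ℕ → ℕ) (p q : ℕ) : Prop :=
  IsBoundary k r μ ν p q ∧ ¬ IsTunnel k r μ ν p q

/-- The tunnel hook `h(r,τ)` for a tunnel cell `τ = (p,q)` of `D^{(r-1)}_{μ/ν}`:
all boundary cells in rows `r` through `p`. -/
def hook (k r : ℕ) (μ : ℕ → ℤ) (ν : ℕ → ℕ) (p : ℕ) : Set (ℕ × ℕ) :=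
  {c : ℕ × ℕ | IsBoundary k r μ ν c.1 c.2 ∧ c.1 ≤ p}

/-- The value `Δ(h(r,τ)) = (μ_r − ν_r) + (ν_r + 1 − q) + (p − r)` for `τ = (p,q)`. -/
def hookDelta (μ : ℕ → ℤ) (ν : ℕ → ℕ) (r p q : ℕ) : ℤ :=
  (μ r - (ν r : ℤ)) + (((ν r : ℤ) + 1) - (q : ℤ)) + ((p : ℤ) - (r : ℤ))

/-- The update `ν ↦ ν^{(r)}`: `ν'_i = ν_{i-1} + 1` for `r < i ≤ p`, else `ν'_i = ν_i`. -/
def nuUpdate (ν : ℕ → ℕ) (r p : ℕ) : ℕ → ℕ := fun i =>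
  if r < i ∧ i ≤ p then ν (i - 1) + 1 else ν i

/-- The sequence `ν^{(0)}, ν^{(1)}, …` of intermediate shapes of a tunnel hook covering
with terminal rows `p 1, p 2, …`. -/
def nuSeq (ν₀ : ℕ → ℕ) (p : ℕ → ℕ) : ℕ → ℕ → ℕ
  | 0 => ν₀
  | r + 1 => nuUpdate (nuSeq ν₀ p r) (r + 1) (p (r + 1))

/-- A tunnel hook covering of `D_{μ/ν₀}` : for each `r = 1, …, k` a tunnel cell
`(p r, q r)` of `D^{(r-1)}_{μ/ν^{(r-1)}}` (values outside `1 ≤ r ≤ k` normalized to `0`). -/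
structure THC (k : ℕ) (μ : ℕ → ℤ) (ν₀ : ℕ → ℕ) where
  p : ℕ → ℕ
  q : ℕ → ℕ
  tunnel : ∀ r, 1 ≤ r → r ≤ k → IsTunnel k r μ (nuSeq ν₀ p (r - 1)) (p r) (q r)
  p_out : ∀ r, r = 0 ∨ k < r → p r = 0
  q_out : ∀ r, r = 0 ∨ k < r → q r = 0

/-- Row-ordered noncommutative determinant (Laplace expansion from the top row down). -/
noncomputable def ndet {k : ℕ} (A : Fin k → Fin k → NSym) : NSym :=
  ∑ σ : Equiv.Perm (Fin k),
    ((Equiv.Perm.sign σ : ℤ) • (List.ofFn fun i => A i (σ i)).prod)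

/-- The immaculate function `I_μ = ndet (H_{μ_i + j − i})` (1-based `μ`). -/
noncomputable def Imm (k : ℕ) (μ : ℕ → ℤ) : NSym :=
  ndet fun i j : Fin k => H (μ (i.1 + 1) + ((j.1 : ℤ) + 1) - ((i.1 : ℤ) + 1))

/-- The skew immaculate function `I_{μ/ν} = ndet (H_{(μ_i − i) − (ν_j − j)})`. -/
noncomputable def ImmSkew (k : ℕ) (μ ν : ℕ → ℤ) : NSym :=
  ndet fun i j : Fin k =>
    H ((μ (i.1 + 1) - ((i.1 : ℤ) + 1)) - (ν (j.1 + 1) - ((j.1 : ℤ) + 1)))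

/-- The signed product `∏_{r=1}^{k} ε(h(r,τ_r)) H_{Δ(h(r,τ_r))}` attached to a
tunnel hook covering, the product taken in the order `r = 1, …, k`. -/
noncomputable def thcTerm (k : ℕ) (μ : ℕ → ℤ) (ν₀ : ℕ → ℕ) (γ : THC k μ ν₀) : NSym :=
  (List.ofFn fun r : Fin k =>
    (-1 : NSym) ^ (γ.p (r.1 + 1) - (r.1 + 1)) *
      H (hookDelta μ (nuSeq ν₀ γ.p r.1) (r.1 + 1) (γ.p (r.1 + 1)) (γ.q (r.1 + 1)))).prod
/-- Two cells are adjacent iff their taxicab distance is 1. -/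
def Adj (c d : ℕ × ℕ) : Prop :=
  ((c.1 : ℤ) - (d.1 : ℤ)).natAbs + ((c.2 : ℤ) - (d.2 : ℤ)).natAbs = 1

/-- A set of cells is connected: any two of its cells are joined by a chain of
cells of the set in which consecutive cells are adjacent. -/
def ConnectedSet (C : Set (ℕ × ℕ)) : Prop :=
  ∀ c ∈ C, ∀ d ∈ C, ∃ l : List (ℕ × ℕ),
    l.head? = some c ∧ l.getLast? = some d ∧ (∀ x ∈ l, x ∈ C) ∧ l.Chain' Adj

/-- `m_r = #{ i < r : σ_i > σ_r }`. -/
def mcount {k : ℕ} (σ : Equiv.Perm (Fin k)) (r : Fin k) : ℕ :=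
  (Finset.univ.filter fun i : Fin k => i < r ∧ σ r < σ i).card

/-- The set `{σ_{r+1}, …, σ_k}` of one-line (1-based) values of `σ` at positions `> r`. -/
def onelineTail {k : ℕ} (σ : Equiv.Perm (Fin k)) (r : ℕ) : Finset ℕ :=
  (Finset.univ.filter fun i : Fin k => r < i.1 + 1).image fun i => (σ i).1 + 1

/-- `beta σ r t` : the `t`-th smallest element of `{σ_{r+1}, …, σ_k}`. -/
def beta {k : ℕ} (σ : Equiv.Perm (Fin k)) (r t : ℕ) : ℕ :=
  ((onelineTail σ r).sort (· ≤ ·)).getD (t - 1) 0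

/-- The exponent `δ` in the sign of a linear permutation `π ∈ A_{k,m}`. -/
def lpInv {k m : ℕ} (π : Fin m ↪ Fin k) : ℕ :=
  (Finset.univ.filter fun p : Fin m × Fin m => p.1 < p.2 ∧ π p.2 < π p.1).card +
  (Finset.univ.filter fun p : Fin m × Fin k => (∀ t, π t ≠ p.2) ∧ p.2 < π p.1).card

/-- `betaC π j` : the `j`-th smallest element of `{1,…,k} ∖ {π_1,…,π_m}` (1-based values). -/
def betaC {k m : ℕ} (π : Fin m ↪ Fin k) (j : ℕ) : ℕ :=
  (((Finset.univ.filter fun q : Fin k => ∀ t, π t ≠ q).image fun q => q.1 + 1).sort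
    (· ≤ ·)).getD (j - 1) 0

/-- Coarsening `Θ(α,S)` of a sequence: replace the comma at each position in `S`
(1-based; position `i` lies between parts `i` and `i+1`) by addition. -/
def theta {α : Type} [Add α] (S : Finset ℕ) : ℕ → List α → List α
  | _, [] => []
  | _, [a] => [a]
  | i, a :: b :: rest =>
      if i ∈ S then theta S (i + 1) ((a + b) :: rest)
      else a :: theta S (i + 1) (b :: rest)
  termination_by i l => l.length

noncomputable def Hlist (β : List ℤ) : NSym := (β.map H).prod

/-- The ribbon function `R_β = Σ_{γ ⪰ β} (−1)^{ℓ(β)−ℓ(γ)} H_γ`, with `R_β = 0`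
whenever `β` has a part `≤ 0`. -/
noncomputable def Ribbon (β : List ℤ) : NSym :=
  if ∀ x ∈ β, 0 < x then
    ∑ S ∈ (Finset.Icc 1 (β.length - 1)).powerset,
      (-1 : NSym) ^ (β.length - (theta S 1 β).length) * Hlist (theta S 1 β)
  else 0

/-!
Write `x_i = ν_i - i` for the shifted parts of a shape `ν`. If the rows of `ν` weakly decrease
from row `r` on, the tunnel cells of `D^{(r-1)}_{μ/ν}` are exactly the cells `(p, ν_p + 1)` with
`r ≤ p ≤ k`, so a tunnel hook covering is nothing but a choice of rows `r ≤ p_r ≤ k`, i.e. a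
Lehmer code. The update `ν ↦ ν^{(r)}` deletes `x_p` from the sequence `(x_i)_{i ≥ r}` and moves
the entries above it down one row, while `Δ(h(r,τ)) = (μ_r - r) - x_p`. Starting from
`x_a = λ_a - a`, the entry deleted at step `r` is therefore `λ_{σ_r} - σ_r` for the permutation
`σ` with Lehmer code `(p_r - r)_r`; the term of the covering is then the term of `σ` in the
noncommutative determinant, the sign coming out as `(-1)^{Σ (p_r - r)} = sign σ`.
-/

open Finset Equiv

section

variable {k : ℕ} {μ : ℕ → ℤ} {lam : ℕ → ℕ}

lemma decFrom_nuUpdate {r : ℕ} {ν : ℕ → ℕ} (hν : DecFrom k r ν) (p : ℕ) :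
    DecFrom k (r + 1) (nuUpdate ν r p) := by
  intro i hi hik
  have hi₁ := hν i (by omega) hik
  have hi₀ := hν (i - 1) (by omega) (by omega)
  rw [Nat.sub_add_cancel (by omega)] at hi₀
  simp only [nuUpdate, Nat.add_sub_cancel]
  split_ifs <;> omega

lemma decFrom_nuSeq (hlam : DecFrom k 1 lam) (p : ℕ → ℕ) (r : ℕ) :
    DecFrom k (r + 1) (nuSeq lam p r) := by
  induction r with
  | zero => exact hlam
  | succ r ih => exact decFrom_nuUpdate ih _

lemma isTunnel_of_decFrom {r p : ℕ} (μ : ℕ → ℤ) {ν : ℕ → ℕ} (hν : DecFrom k r ν)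
    (hrp : r ≤ p) (hpk : p ≤ k) : IsTunnel k r μ ν p (ν p + 1) := by
  refine ⟨⟨hrp, hpk, ?_⟩, rfl⟩
  split_ifs with hpr
  · subst hpr
    exact ⟨le_rfl, by push_cast; exact le_max_left _ _⟩
  · have := hν (p - 1) (by omega) (by omega)
    rw [Nat.sub_add_cancel (by omega)] at this
    exact ⟨le_rfl, by omega⟩

namespace THC

lemma q_eq (γ : THC k μ lam) (r : Fin k) :
    γ.q (r + 1) = nuSeq lam γ.p r (γ.p (r + 1)) + 1 :=
  (γ.tunnel (r + 1) (by omega) r.2).2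

lemma p_bounds (γ : THC k μ lam) {r : ℕ} (h₁ : 1 ≤ r) (h₂ : r ≤ k) :
    r ≤ γ.p r ∧ γ.p r ≤ k :=
  ⟨(γ.tunnel r h₁ h₂).1.1, (γ.tunnel r h₁ h₂).1.2.1⟩

lemma ext_p {γ γ' : THC k μ lam} (h : γ.p = γ'.p) : γ = γ' := by
  obtain ⟨p, q, tunnel, p_out, q_out⟩ := γ
  obtain ⟨p', q', tunnel', p_out', q_out'⟩ := γ'
  obtain rfl : p = p' := h
  obtain rfl : q = q' := funext fun r => by
    by_cases hr : 1 ≤ r ∧ r ≤ k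
    · rw [(tunnel r hr.1 hr.2).2, (tunnel' r hr.1 hr.2).2]
    · rw [q_out r (by omega), q_out' r (by omega)]
  rfl

def ofRows (μ : ℕ → ℤ) (hlam : DecFrom k 1 lam) (p : ℕ → ℕ)
    (hp : ∀ r, 1 ≤ r → r ≤ k → r ≤ p r ∧ p r ≤ k)
    (p_out : ∀ r, r = 0 ∨ k < r → p r = 0) : THC k μ lam where
  p := p
  q r := if 1 ≤ r ∧ r ≤ k then nuSeq lam p (r - 1) (p r) + 1 else 0
  tunnel r h₁ h₂ := by
    rw [if_pos ⟨h₁, h₂⟩]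
    have hdec := decFrom_nuSeq hlam p (r - 1)
    rw [Nat.sub_add_cancel h₁] at hdec
    exact isTunnel_of_decFrom μ hdec (hp r h₁ h₂).1 (hp r h₁ h₂).2
  p_out := p_out
  q_out r hr := if_neg (by omega)

end THC

/-- Both the choices of how far below its first row each tunnel hook of a covering ends, and the
Lehmer codes of permutations of `Fin k`. -/
abbrev LehmerCode (k : ℕ) : Type := (r : Fin k) → Fin (k - r)

namespace LehmerCode

lemma card_eq_factorial (k : ℕ) : Fintype.card (LehmerCode k) = k.factorial := by
  rw [Fintype.card_pi, ← Nat.descFactorial_self, Nat.descFactorial_eq_prod_range,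
    ← Fin.prod_univ_eq_prod_range]
  simp

/-- The terminal rows `p_r = r + c_{r-1}`, in the 1-based row indexing of `THC.p`. -/
def rows (c : LehmerCode k) (r : ℕ) : ℕ :=
  if h : 1 ≤ r ∧ r ≤ k then r + c ⟨r - 1, by omega⟩ else 0

lemma rows_succ (c : LehmerCode k) (r : Fin k) : c.rows (r + 1) = r + 1 + c r := by
  rw [rows, dif_pos ⟨by omega, r.2⟩]
  rfl

lemma rows_bounds (c : LehmerCode k) {r : ℕ} (h₁ : 1 ≤ r) (h₂ : r ≤ k) :
    r ≤ c.rows r ∧ c.rows r ≤ k := by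
  rw [rows, dif_pos ⟨h₁, h₂⟩]
  have : (c ⟨r - 1, by omega⟩ : ℕ) < k - (r - 1) := (c _).2
  omega

lemma rows_out (c : LehmerCode k) {r : ℕ} (hr : r = 0 ∨ k < r) : c.rows r = 0 :=
  dif_neg (by omega)

lemma rows_injective : Function.Injective (rows (k := k)) := by
  intro c c' h
  funext r
  have := congrFun h (r + 1)
  rw [rows_succ, rows_succ] at this
  exact Fin.ext (by omega)

end LehmerCode

open LehmerCode

def thcOfCode (μ : ℕ → ℤ) (hlam : DecFrom k 1 lam) (c : LehmerCode k) : THC k μ lam :=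
  .ofRows μ hlam c.rows (fun _ => c.rows_bounds) (fun _ => c.rows_out)

lemma thcOfCode_p (hlam : DecFrom k 1 lam) (c : LehmerCode k) :
    (thcOfCode μ hlam c).p = c.rows := rfl

lemma thcOfCode_bijective (hlam : DecFrom k 1 lam) :
    Function.Bijective (thcOfCode μ hlam) := by
  refine ⟨fun c c' h => rows_injective (congrArg THC.p h), fun γ => ?_⟩
  refine ⟨fun r => ⟨γ.p (r + 1) - (r + 1), ?_⟩, THC.ext_p (funext fun r => ?_)⟩
  · have := γ.p_bounds (r := r + 1) (by omega) r.2
    omega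
  · rw [thcOfCode_p]
    by_cases hr : 1 ≤ r ∧ r ≤ k
    · obtain ⟨r, rfl⟩ : ∃ r' : Fin k, r = r' + 1 := ⟨⟨r - 1, by omega⟩, by simp; omega⟩
      rw [rows_succ]
      have := γ.p_bounds (r := r + 1) (by omega) r.2
      dsimp only
      omega
    · rw [rows_out _ (by omega), γ.p_out r (by omega)]

namespace Equiv.Perm

variable (σ : Perm (Fin k))

def countFrom (r : ℕ) (a : Fin k) : ℕ := #{j | r ≤ j.1 ∧ σ j < a}

lemma card_filter_apply_lt (a : Fin k) : #{j | σ j < a} = a := by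
  rw [card_equiv σ (t := Iio a) (by simp), Fin.card_Iio]

lemma countFrom_zero (a : Fin k) : σ.countFrom 0 a = a := by
  simp [countFrom, card_filter_apply_lt]

lemma countFrom_add_card (r : ℕ) (a : Fin k) :
    σ.countFrom r a + #{j | j.1 < r ∧ σ j < a} = a := by
  rw [← σ.card_filter_apply_lt a,
    ← card_filter_add_card_filter_not (s := {j | σ j < a}) (fun j : Fin k => r ≤ j.1),
    filter_filter, filter_filter]
  simp only [countFrom, and_comm, not_le]

lemma countFrom_eq_of_eqOn {τ : Perm (Fin k)} {r : ℕ} (h : ∀ j : Fin k, j.1 < r → σ j = τ j) :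
    σ.countFrom r = τ.countFrom r := by
  funext a
  have hσ := σ.countFrom_add_card r a
  have hτ := τ.countFrom_add_card r a
  have : #{j | j.1 < r ∧ σ j < a} = #{j | j.1 < r ∧ τ j < a} :=
    congrArg card (filter_congr fun j _ => and_congr_right fun hj => by rw [h j hj])
  omega

lemma countFrom_lt_countFrom {r : ℕ} {i j : Fin k} (hi : r ≤ i.1) (hij : σ i < σ j) :
    σ.countFrom r (σ i) < σ.countFrom r (σ j) := by
  refine card_lt_card ⟨fun l hl => ?_, fun hsub => ?_⟩
  · simp only [mem_filter, mem_univ, true_and] at hl ⊢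
    exact ⟨hl.1, hl.2.trans hij⟩
  · have := hsub (mem_filter.2 ⟨mem_univ i, hi, hij⟩)
    simp at this

lemma countFrom_succ (r a : Fin k) :
    σ.countFrom r a = σ.countFrom (r + 1) a + if σ r < a then 1 else 0 := by
  unfold countFrom
  split_ifs with h
  · rw [← card_insert_of_notMem (a := r) (by simp)]
    congr 1
    ext j
    simp only [mem_filter, mem_univ, true_and, mem_insert]
    rcases eq_or_ne j r with rfl | hj
    · simpa
    · have := Fin.val_ne_of_ne hj
      simp only [hj, false_or]
      omega
  · rw [add_zero]
    congr 1
    ext j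
    simp only [mem_filter, mem_univ, true_and]
    rcases eq_or_ne j r with rfl | hj
    · simpa using h
    · have := Fin.val_ne_of_ne hj
      omega

lemma countFrom_self_lt (r : Fin k) : σ.countFrom r (σ r) < k - r := by
  calc σ.countFrom r (σ r) ≤ #(Ioi r) := card_le_card fun j hj => by
        simp only [mem_filter, mem_univ, true_and, mem_Ioi] at hj ⊢
        exact lt_of_le_of_ne hj.1 (by rintro rfl; exact lt_irrefl _ hj.2)
    _ < k - r := by rw [Fin.card_Ioi]; omega

def lehmerCode : LehmerCode k := fun r => ⟨σ.countFrom r (σ r), σ.countFrom_self_lt r⟩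

lemma lehmerCode_injective : Function.Injective (lehmerCode (k := k)) := by
  intro σ τ h
  suffices ∀ n (j : Fin k), j.1 = n → σ j = τ j from Equiv.ext fun j => this j j rfl
  intro n
  induction n using Nat.strong_induction_on with
  | _ n ih =>
    rintro j rfl
    have hcount := σ.countFrom_eq_of_eqOn fun i hi => ih i hi i rfl
    have hcode : σ.countFrom j (σ j) = τ.countFrom j (τ j) := congrArg Fin.val (congrFun h j)
    rw [← hcount] at hcode
    obtain ⟨i, hi⟩ := σ.surjective (τ j)
    have hji : j ≤ i := by
      by_contra! hij
      exact hij.ne (τ.injective (hi ▸ (ih i hij i rfl).symm))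
    rw [← hi] at hcode ⊢
    rcases lt_trichotomy (σ j) (σ i) with hlt | heq | hgt
    · exact absurd hcode (σ.countFrom_lt_countFrom le_rfl hlt).ne
    · exact heq
    · exact absurd hcode (σ.countFrom_lt_countFrom hji hgt).ne'

lemma lehmerCode_bijective : Function.Bijective (lehmerCode (k := k)) := by
  rw [Fintype.bijective_iff_injective_and_card, Fintype.card_perm, Fintype.card_fin,
    LehmerCode.card_eq_factorial]
  exact ⟨lehmerCode_injective, rfl⟩

lemma sign_eq_neg_one_pow_sum_lehmerCode :
    sign σ = (-1) ^ ∑ r, (σ.lehmerCode r : ℕ) := by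
  rw [sign_eq_prod_prod_Ioi, ← prod_pow_eq_pow_sum]
  refine prod_congr rfl fun r _ => ?_
  rw [prod_ite, prod_const_one, one_mul, prod_const]
  congr 1
  show _ = #{j | (r : ℕ) ≤ j.1 ∧ σ j < σ r}
  congr 1
  ext j
  simp only [mem_filter, mem_Ioi, not_lt, mem_univ, true_and]
  rcases eq_or_ne j r with rfl | hj
  · simp
  have hσ := Fin.val_ne_of_ne (σ.injective.ne hj)
  have := Fin.val_ne_of_ne hj
  simp only [Fin.lt_def, Fin.le_def]
  omega

end Equiv.Perm

lemma List.prod_ofFn_neg_one_pow_mul {R : Type*} [Ring R] {n : ℕ} (e : Fin n → ℕ)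
    (x : Fin n → R) :
    (List.ofFn fun i => (-1 : R) ^ e i * x i).prod = (-1) ^ (∑ i, e i) * (List.ofFn x).prod := by
  induction n with
  | zero => simp
  | succ n ih =>
    rw [List.ofFn_succ, List.ofFn_succ, List.prod_cons, List.prod_cons, ih, Fin.sum_univ_succ,
      pow_add, mul_assoc, mul_assoc, (((Commute.neg_one_left _).pow_left _).symm).left_comm]

lemma hookDelta_tunnel (μ : ℕ → ℤ) (ν : ℕ → ℕ) (r p : ℕ) :
    hookDelta μ ν r p (ν p + 1) = (μ r - r) - (ν p - p) := by
  unfold hookDelta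
  push_cast
  ring

lemma thcTerm_eq (γ : THC k μ lam) :
    thcTerm k μ lam γ = (List.ofFn fun r : Fin k => (-1 : NSym) ^ (γ.p (r + 1) - (r + 1)) *
      H ((μ (r + 1) - (r + 1 : ℕ)) - (nuSeq lam γ.p r (γ.p (r + 1)) - γ.p (r + 1)))).prod := by
  unfold thcTerm
  congr
  funext r
  rw [γ.q_eq, hookDelta_tunnel]

/-- Along the covering of `σ`, the rows `i > r` of `ν^{(r)}` carry the shifted parts
`ν_i - i = λ_a - a` of the columns `a = σ_j` with `j > r`, in increasing order of `a`. -/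
lemma nuSeq_lehmerCode_rows (σ : Perm (Fin k)) (r : ℕ) (j : Fin k)
    (hrj : r ≤ j.1) :
    (nuSeq lam σ.lehmerCode.rows r (r + 1 + σ.countFrom r (σ j)) : ℤ)
        - (r + 1 + σ.countFrom r (σ j) : ℕ) = lam ((σ j : ℕ) + 1) - ((σ j : ℕ) + 1 : ℕ) := by
  induction r with
  | zero => simp [nuSeq, Perm.countFrom_zero, add_comm]
  | succ r ih =>
    set r' : Fin k := ⟨r, by omega⟩
    have hrow : σ.lehmerCode.rows (r + 1) = r + 1 + σ.countFrom r (σ r') :=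
      σ.lehmerCode.rows_succ r'
    have hcount : σ.countFrom r (σ j) = σ.countFrom (r + 1) (σ j) + if σ r' < σ j then 1 else 0 :=
      σ.countFrom_succ r' (σ j)
    have ih := ih (by omega)
    have hjr : σ j ≠ σ r' := σ.injective.ne (Fin.ne_of_val_ne (by simp [r']; omega))
    simp only [nuSeq, nuUpdate]
    rw [hrow]
    rcases lt_or_gt_of_ne hjr with hlt | hgt
    · have := σ.countFrom_lt_countFrom (r := r) (by omega) hlt
      rw [if_neg (lt_asymm hlt)] at hcount
      rw [if_pos (by omega), show r + 1 + 1 + σ.countFrom (r + 1) (σ j) - 1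
        = r + 1 + σ.countFrom r (σ j) by omega]
      push_cast at ih ⊢
      omega
    · have := σ.countFrom_lt_countFrom (r := r) le_rfl hgt
      rw [if_pos hgt] at hcount
      rw [if_neg (by omega), show r + 1 + 1 + σ.countFrom (r + 1) (σ j)
        = r + 1 + σ.countFrom r (σ j) by omega]
      push_cast at ih ⊢
      omega

lemma thcTerm_thcOfCode_lehmerCode (μ : ℕ → ℤ) (hlam : DecFrom k 1 lam) (σ : Perm (Fin k)) :
    thcTerm k μ lam (thcOfCode μ hlam σ.lehmerCode) = (Perm.sign σ : ℤ) • (List.ofFn fun i =>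
      H ((μ (i + 1) - (i + 1 : ℤ)) - ((lam ((σ i : ℕ) + 1) : ℤ) - ((σ i : ℕ) + 1 : ℤ)))).prod := by
  have hfactor : ∀ r : Fin k, σ.lehmerCode.rows (r + 1) - (r + 1) = σ.lehmerCode r ∧
      (nuSeq lam σ.lehmerCode.rows r (σ.lehmerCode.rows (r + 1)) : ℤ) - σ.lehmerCode.rows (r + 1)
        = lam ((σ r : ℕ) + 1) - ((σ r : ℕ) + 1 : ℕ) := fun r => by
    rw [LehmerCode.rows_succ]
    exact ⟨by omega, nuSeq_lehmerCode_rows σ r r le_rfl⟩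
  rw [thcTerm_eq, thcOfCode_p]
  simp only [(hfactor _).1, (hfactor _).2]
  rw [List.prod_ofFn_neg_one_pow_mul, σ.sign_eq_neg_one_pow_sum_lehmerCode]
  simp [zsmul_eq_mul]

end

theorem skew_immaculate_eq_sum_tunnel_hook_coverings_general (k : ℕ) (μ : ℕ → ℤ)
    (lam : ℕ → ℕ) (hlam : DecFrom k 1 lam) :
    ImmSkew k μ (fun i => (lam i : ℤ)) = ∑ᶠ γ : THC k μ lam, thcTerm k μ lam γ := by
  rw [← finsum_comp _ ((thcOfCode_bijective hlam).comp Perm.lehmerCode_bijective),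
    finsum_eq_sum_of_fintype, ImmSkew, ndet]
  exact Finset.sum_congr rfl fun σ _ => (thcTerm_thcOfCode_lehmerCode μ hlam σ).symm

/-- **Theorem 2 (main, skew version).** For every `μ ∈ ℤ^k` and every partition `λ`
with at most `k` parts, `I_{μ/λ} = Σ_{γ ∈ THC_{μ/λ}} ∏_{r=1}^{k} ε(h(r,τ_r)) H_{Δ(h(r,τ_r))}`,
the sum being over all tunnel hook coverings of `D_{μ/λ}` and the product taken in
the order `r = 1, …, k`. -/
theorem skew_immaculate_eq_sum_tunnel_hook_coverings (k : ℕ) (hk : 1 ≤ k) (μ : ℕ → ℤ)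
    (lam : ℕ → ℕ) (hlam : DecFrom k 1 lam) :
    ImmSkew k μ (fun i => (lam i : ℤ)) = ∑ᶠ γ : THC k μ lam, thcTerm k μ lam γ :=
  skew_immaculate_eq_sum_tunnel_hook_coverings_general k μ lam hlam
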